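/- arXiv:2111.04532 — 5 statements merged into one kernel-verified Lean document; each statement's English description precedes it below -/
import Mathlib

section
/- Let B = B(0,1) ⊂ ℝⁿ be the open unit ball and γ ≥ 1. Then the radially symmetric function v(x) = -(1-|x|²)^((n+1)/(n+γ)) is convex on B. -/
/-! `1 - ‖x‖²` is concave and nonnegative on the ball, and `t ↦ t ^ η` is concave and
nondecreasing on `[0, ∞)` because `γ ≥ 1` forces `η ≤ 1`; so `(1 - ‖x‖²) ^ η` is concave. -/

open Set

theorem ConcaveOn.comp_of_mapsTo {𝕜 E α β : Type*} [Semiring 𝕜] [PartialOrder 𝕜]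
    [AddCommMonoid E] [AddCommMonoid α] [PartialOrder α] [AddCommMonoid β] [PartialOrder β]
    [SMul 𝕜 E] [SMul 𝕜 α] [SMul 𝕜 β] {s : Set E} {t : Set β} {f : E → β} {g : β → α}
    (hg : ConcaveOn 𝕜 t g) (hf : ConcaveOn 𝕜 s f) (hst : MapsTo f s t) (hg' : MonotoneOn g t) :
    ConcaveOn 𝕜 s (g ∘ f) :=
  ⟨hf.1, fun _ hx _ hy _ _ ha hb hab =>
    (hg.2 (hst hx) (hst hy) ha hb hab).trans <|
      hg' (hg.1 (hst hx) (hst hy) ha hb hab) (hst <| hf.1 hx hy ha hb hab) <|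
        hf.2 hx hy ha hb hab⟩

theorem ConcaveOn.rpow {E : Type*} [AddCommMonoid E] [Module ℝ E] {s : Set E} {f : E → ℝ}
    {p : ℝ} (hf : ConcaveOn ℝ s f) (hf₀ : ∀ x ∈ s, 0 ≤ f x) (hp₀ : 0 ≤ p) (hp₁ : p ≤ 1) :
    ConcaveOn ℝ s fun x => f x ^ p :=
  (Real.concaveOn_rpow hp₀ hp₁).comp_of_mapsTo hf hf₀
    fun _ ha _ _ hab => Real.rpow_le_rpow ha hab hp₀

theorem concaveOn_one_sub_norm_sq {E : Type*} [SeminormedAddCommGroup E] [NormedSpace ℝ E]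
    {s : Set E} (hs : Convex ℝ s) : ConcaveOn ℝ s fun x => 1 - ‖x‖ ^ 2 := by
  have hsq : ConvexOn ℝ s fun x => ‖x‖ ^ 2 :=
    (convexOn_norm hs).pow (fun x _ => norm_nonneg x) 2
  exact (hsq.neg.add_const 1).congr fun x _ => by simp only [Pi.add_apply, Pi.neg_apply]; ring

theorem stmt_0_general (n : ℕ) (γ : ℝ) (hγ : 1 ≤ γ) :
    ConvexOn ℝ (Metric.ball (0 : EuclideanSpace ℝ (Fin n)) 1)
      (fun x => -((1 - ‖x‖ ^ 2) ^ (((n : ℝ) + 1) / ((n : ℝ) + γ)))) := by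
  have hη₀ : 0 ≤ ((n : ℝ) + 1) / ((n : ℝ) + γ) := by positivity
  have hη₁ : ((n : ℝ) + 1) / ((n : ℝ) + γ) ≤ 1 := by
    rw [div_le_one (by positivity)]
    linarith
  have hpos : ∀ x ∈ Metric.ball (0 : EuclideanSpace ℝ (Fin n)) 1, 0 ≤ 1 - ‖x‖ ^ 2 := by
    intro x hx
    rw [mem_ball_zero_iff] at hx
    nlinarith [norm_nonneg x]
  exact ((concaveOn_one_sub_norm_sq (convex_ball 0 1)).rpow hpos hη₀ hη₁).neg

/-- For `γ ≥ 1`, the radially symmetric function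
`v(x) = -(1-‖x‖²)^((n+1)/(n+γ))` is convex on the open unit ball of `ℝⁿ`. -/
theorem stmt_0 (n : ℕ) (hn : 1 ≤ n) (γ : ℝ) (hγ : 1 ≤ γ) :
    ConvexOn ℝ (Metric.ball (0 : EuclideanSpace ℝ (Fin n)) 1)
      (fun x => -((1 - ‖x‖ ^ 2) ^ (((n : ℝ) + 1) / ((n : ℝ) + γ)))) :=
  stmt_0_general n γ hγ
end

section
/- Let B = B(0,1) ⊂ ℝⁿ, γ ≥ 1, and v(x) = -(1-|x|²)^η with η = (n+1)/(n+γ). Then for all x in B with x ≠ 0, det D²v(x) = (2η)ⁿ [1 + (1-2η)|x|²] · (-v(x))^(-γ). -/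
/-!
`v` is the radial function `g (‖x‖²)` with `g t = -(1 - t) ^ η`, and the Hessian of a radial
function at `x` is `2 g'(t) I + 4 g''(t) x xᵀ` with `t = ‖x‖²`. By the matrix determinant lemma
its determinant is `(2 g'(t))ⁿ (1 + 2 g''(t) t / g'(t))`, which for this `g` equals
`(2η)ⁿ (1 + (1 - 2η) t) (1 - t) ^ (n (η - 1) - 1)`. The choice `η (n + γ) = n + 1` is exactly
what makes the exponent `n (η - 1) - 1` equal to `-γ η`.
-/

/-- The determinant of the Hessian matrix of `v` at `x`, where the Hessian entries
are given by the second iterated Fréchet derivative evaluated on basis vectors. -/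
noncomputable def hessDet {n : ℕ} (v : EuclideanSpace ℝ (Fin n) → ℝ)
    (x : EuclideanSpace ℝ (Fin n)) : ℝ :=
  Matrix.det (Matrix.of fun i j =>
    iteratedFDeriv ℝ 2 v x ![EuclideanSpace.single i 1, EuclideanSpace.single j 1])

open Filter Topology
open scoped RealInnerProductSpace

theorem Matrix.det_smul_one_add_vecMulVec {m K : Type*} [Fintype m] [DecidableEq m] [Field K]
    {a : K} (ha : a ≠ 0) (u w : m → K) :
    (a • (1 : Matrix m m K) + vecMulVec u w).det
      = a ^ Fintype.card m * (1 + a⁻¹ * (w ⬝ᵥ u)) := by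
  have hfactor : a • (1 : Matrix m m K) + vecMulVec u w = a • (1 + vecMulVec (a⁻¹ • u) w) := by
    rw [smul_add, smul_vecMulVec, smul_smul, mul_inv_cancel₀ ha, one_smul]
  rw [hfactor, det_smul, vecMulVec_eq Unit, det_one_add_replicateCol_mul_replicateRow,
    dotProduct_smul, smul_eq_mul]

section Radial

variable {E : Type*} [NormedAddCommGroup E] [InnerProductSpace ℝ E]

theorem fderiv_fderiv_comp_norm_sq_apply {g g' : ℝ → ℝ} {g'' : ℝ} {x : E}
    (hg : ∀ᶠ y in 𝓝 x, HasDerivAt g (g' (‖y‖ ^ 2)) (‖y‖ ^ 2))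
    (hg' : HasDerivAt g' g'' (‖x‖ ^ 2)) (u w : E) :
    fderiv ℝ (fderiv ℝ fun y => g (‖y‖ ^ 2)) x u w
      = 2 * g' (‖x‖ ^ 2) * ⟪u, w⟫ + 4 * g'' * ⟪x, u⟫ * ⟪x, w⟫ := by
  have hnorm_sq (y : E) := (hasStrictFDerivAt_norm_sq y).hasFDerivAt
  have hfderiv : fderiv ℝ (fun y => g (‖y‖ ^ 2)) =ᶠ[𝓝 x]
      fun y => g' (‖y‖ ^ 2) • (2 • innerSL ℝ y) :=
    hg.mono fun y hy => (hy.comp_hasFDerivAt y (hnorm_sq y)).fderiv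
  have hsecond : HasFDerivAt (fun y => g' (‖y‖ ^ 2) • (2 • innerSL ℝ y)) _ x :=
    (hg'.comp_hasFDerivAt x (hnorm_sq x)).smul ((2 • innerSL ℝ (E := E)).hasFDerivAt (x := x))
  rw [hfderiv.fderiv_eq, hsecond.fderiv]
  simp only [add_apply, smul_apply, ContinuousLinearMap.smulRight_apply, innerSL_apply_apply,
    smul_eq_mul, nsmul_eq_mul, Nat.cast_ofNat, Function.comp_apply]
  rw [innerSL_apply_apply]
  ring

end Radial

theorem hessDet_comp_norm_sq {n : ℕ} {g g' : ℝ → ℝ} {g'' : ℝ} {x : EuclideanSpace ℝ (Fin n)}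
    (hg : ∀ᶠ y in 𝓝 x, HasDerivAt g (g' (‖y‖ ^ 2)) (‖y‖ ^ 2))
    (hg' : HasDerivAt g' g'' (‖x‖ ^ 2)) (h0 : g' (‖x‖ ^ 2) ≠ 0) :
    hessDet (fun y => g (‖y‖ ^ 2)) x
      = (2 * g' (‖x‖ ^ 2)) ^ n * (1 + 2 * g'' / g' (‖x‖ ^ 2) * ‖x‖ ^ 2) := by
  have hhess : (Matrix.of fun i j => iteratedFDeriv ℝ 2 (fun y => g (‖y‖ ^ 2)) x
      ![EuclideanSpace.single i 1, EuclideanSpace.single j 1])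
      = (2 * g' (‖x‖ ^ 2)) • (1 : Matrix (Fin n) (Fin n) ℝ)
        + Matrix.vecMulVec (fun i => 4 * g'' * x i) (fun j => x j) := by
    ext i j
    rw [Matrix.of_apply, iteratedFDeriv_two_apply]
    simp only [Matrix.cons_val_zero, Matrix.cons_val_one,
      fderiv_fderiv_comp_norm_sq_apply hg hg', EuclideanSpace.inner_single_right,
      PiLp.single_apply, Matrix.add_apply, Matrix.smul_apply, Matrix.one_apply,
      Matrix.vecMulVec_apply]
    rcases eq_or_ne i j with rfl | hij
    · simp
    · simp [hij, hij.symm]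
  have hdot : (fun j => x j) ⬝ᵥ (fun i => 4 * g'' * x i) = 4 * g'' * ‖x‖ ^ 2 := by
    simp only [dotProduct, EuclideanSpace.real_norm_sq_eq, Finset.mul_sum]
    exact Finset.sum_congr rfl fun i _ => by ring
  rw [hessDet, hhess, Matrix.det_smul_one_add_vecMulVec (by simpa using h0), hdot,
    Fintype.card_fin]
  field_simp
  ring

theorem hasDerivAt_one_sub_rpow (p : ℝ) {t : ℝ} (ht : t < 1) :
    HasDerivAt (fun u => (1 - u) ^ p) (-(p * (1 - t) ^ (p - 1))) t := by
  have h := ((hasDerivAt_id t).const_sub 1).rpow_const (p := p) (Or.inl (by simp; linarith))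
  simpa using h

theorem rpow_sub_one_pow_mul_inv {s η γ : ℝ} {n : ℕ} (hs : 0 < s)
    (hη : η * (n + γ) = n + 1) :
    (s ^ (η - 1)) ^ n * s⁻¹ = (s ^ η) ^ (-γ) := by
  rw [← Real.rpow_natCast, ← Real.rpow_mul hs.le, ← Real.rpow_neg_one, ← Real.rpow_add hs,
    ← Real.rpow_mul hs.le]
  congr 1
  linear_combination hη

theorem stmt_1_general (n : ℕ) (γ : ℝ) (hγ : 1 ≤ γ)
    (η : ℝ) (hη : η = ((n : ℝ) + 1) / ((n : ℝ) + γ))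
    (v : EuclideanSpace ℝ (Fin n) → ℝ)
    (hv : ∀ x, v x = -((1 - ‖x‖ ^ 2) ^ η))
    (x : EuclideanSpace ℝ (Fin n)) (hx : x ∈ Metric.ball (0 : EuclideanSpace ℝ (Fin n)) 1) :
    hessDet v x = (2 * η) ^ n * (1 + (1 - 2 * η) * ‖x‖ ^ 2) * (-v x) ^ (-γ) := by
  have hnγ : (0 : ℝ) < n + γ := by positivity
  have hη_pos : 0 < η := hη ▸ by positivity
  have hη_mul : η * (n + γ) = n + 1 := by rw [hη]; field_simp
  have hball : ∀ᶠ y in 𝓝 x, ‖y‖ ^ 2 < 1 :=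
    (Metric.isOpen_ball.eventually_mem hx).mono fun y hy => by
      simpa [sq_lt_one_iff₀ (norm_nonneg y)] using hy
  have hs : 0 < 1 - ‖x‖ ^ 2 := sub_pos.2 hball.self_of_nhds
  have hv_eq : v = fun y => -(1 - ‖y‖ ^ 2) ^ η := funext hv
  have hg : ∀ᶠ y in 𝓝 x, HasDerivAt (fun t => -(1 - t) ^ η) (η * (1 - ‖y‖ ^ 2) ^ (η - 1))
      (‖y‖ ^ 2) :=
    hball.mono fun y hy => (hasDerivAt_one_sub_rpow η hy).neg.congr_deriv (neg_neg _)
  have hg' := (hasDerivAt_one_sub_rpow (η - 1) hball.self_of_nhds).const_mul η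
  rw [hv_eq, hessDet_comp_norm_sq hg hg' (by positivity), neg_neg,
    Real.rpow_sub_one hs.ne' (η - 1), ← rpow_sub_one_pow_mul_inv hs hη_mul]
  field_simp
  ring

/-- For `γ ≥ 1`, `η = (n+1)/(n+γ)` and `v(x) = -(1-‖x‖²)^η`, one has
`det D²v(x) = (2η)ⁿ (1 + (1-2η)‖x‖²) (-v(x))^(-γ)` for `x ≠ 0` in the unit ball. -/
theorem stmt_1 (n : ℕ) (hn : 1 ≤ n) (γ : ℝ) (hγ : 1 ≤ γ)
    (η : ℝ) (hη : η = ((n : ℝ) + 1) / ((n : ℝ) + γ))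
    (v : EuclideanSpace ℝ (Fin n) → ℝ)
    (hv : ∀ x, v x = -((1 - ‖x‖ ^ 2) ^ η))
    (x : EuclideanSpace ℝ (Fin n)) (hx : x ∈ Metric.ball (0 : EuclideanSpace ℝ (Fin n)) 1)
    (hx0 : x ≠ 0) :
    hessDet v x = (2 * η) ^ n * (1 + (1 - 2 * η) * ‖x‖ ^ 2) * (-v x) ^ (-γ) :=
  stmt_1_general n γ hγ η hη v hv x hx
end

section
/- Let Δ ⊂ ℝⁿ be the standard simplex and γ > n. Then v(x) = -(x₀x₁⋯xₙ)^(2/(n+γ)) satisfies C₁(-v)^(-γ) ≤ det D²v ≤ C₂(-v)^(-γ) on Δ for some constants C₁, C₂ > 0 depending only on n and γ, and v has infinite slope at every point of ∂Δ. -/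
open Finset Matrix Filter Topology

theorem det_diagonal_add_vecMulVec_sub_smul_vecMulVec {K ι : Type*} [Field K] [Fintype ι]
    [DecidableEq ι] (d : ι → K) (hd : ∀ i, d i ≠ 0) (u w : ι → K) (α : K) :
    (diagonal d + vecMulVec u u - α • vecMulVec w w).det
      = (∏ i, d i) * ((1 + ∑ i, u i ^ 2 / d i) * (1 - α * ∑ i, w i ^ 2 / d i)
          + α * (∑ i, u i * w i / d i) ^ 2) := by
  let U : Matrix ι (Fin 2) K := of fun i => ![u i, -α * w i]
  let V : Matrix (Fin 2) ι K := of ![u, w]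
  have hUV : vecMulVec u u - α • vecMulVec w w = U * V := by
    ext i j
    simp only [Matrix.sub_apply, vecMulVec_apply, Matrix.smul_apply, smul_eq_mul, mul_apply,
      of_apply, cons_val', cons_val_fin_one, Fin.sum_univ_two, cons_val_zero, cons_val_one, U, V]
    ring
  have hD : IsUnit (diagonal d).det := by
    simpa [det_diagonal, isUnit_iff_ne_zero, prod_ne_zero_iff] using hd
  have hinv : (diagonal d)⁻¹ = diagonal fun i => (d i)⁻¹ :=
    inv_eq_left_inv <| by simp [diagonal_mul_diagonal, inv_mul_cancel₀ (hd _)]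
  rw [add_sub_assoc, hUV, det_add_mul U V hD, det_diagonal, hinv]
  have h2 : V * diagonal (fun i => (d i)⁻¹) * U
      = !![∑ i, u i ^ 2 / d i, -α * ∑ i, u i * w i / d i;
           ∑ i, u i * w i / d i, -α * ∑ i, w i ^ 2 / d i] := by
    ext p q
    rw [mul_apply]
    simp only [mul_diagonal, mul_sum]
    fin_cases p <;> fin_cases q <;> exact sum_congr rfl fun _ _ => by
      simp only [Fin.zero_eta, Fin.mk_one, of_apply, cons_val', cons_val_fin_one, cons_val_zero,
        cons_val_one, U, V]
      ring
  rw [h2, det_fin_two]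
  congr 1
  simp only [Matrix.add_apply, one_apply_eq, one_apply_ne zero_ne_one, one_apply_ne one_ne_zero,
    of_apply, cons_val', cons_val_zero, cons_val_fin_one, cons_val_one]
  ring

theorem iteratedFDeriv_two_apply_eq_of_hasFDerivAt {𝕜 E F : Type*} [NontriviallyNormedField 𝕜]
    [NormedAddCommGroup E] [NormedSpace 𝕜 E] [NormedAddCommGroup F] [NormedSpace 𝕜 F]
    {f : E → F} {g : E → F} {x u w : E} {L : E →L[𝕜] F} (hf : ContDiffAt 𝕜 2 f x)
    (hfg : (fun y => fderiv 𝕜 f y w) =ᶠ[𝓝 x] g) (hg : HasFDerivAt g L x) :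
    iteratedFDeriv 𝕜 2 f x ![u, w] = L u := by
  have hdiff : DifferentiableAt 𝕜 (fderiv 𝕜 f) x :=
    (hf.fderiv_right (m := 1) le_rfl).differentiableAt one_ne_zero
  rw [iteratedFDeriv_two_apply, ← hg.fderiv, ← hfg.fderiv_eq,
    fderiv_clm_apply hdiff (differentiableAt_const w)]
  simp

theorem exists_pos_mul_pow_le_prod_lineMap {ι : Type*} [Fintype ι] [DecidableEq ι]
    {a b : ι → ℝ} (ha : ∀ i, 0 ≤ a i) {i₀ : ι} (hi₀ : 0 < a i₀) (hb : ∀ i, 0 < b i) :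
    ∃ c > 0, ∀ s ∈ Set.Icc (0 : ℝ) (1 / 2),
      c * s ^ (Fintype.card ι - 1) ≤ ∏ i, ((1 - s) * a i + s * b i) := by
  refine ⟨a i₀ / 2 * ∏ i ∈ univ.erase i₀, b i,
    mul_pos (half_pos hi₀) (prod_pos fun i _ => hb i), fun s ⟨hs0, hs1⟩ => ?_⟩
  have hbig : a i₀ / 2 ≤ (1 - s) * a i₀ + s * b i₀ := by nlinarith [hb i₀]
  have hsmall : (∏ i ∈ univ.erase i₀, b i) * s ^ (Fintype.card ι - 1)
      ≤ ∏ i ∈ univ.erase i₀, ((1 - s) * a i + s * b i) := by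
    rw [← card_univ, ← card_erase_of_mem (mem_univ i₀), ← prod_const, ← prod_mul_distrib]
    exact prod_le_prod (fun i _ => by nlinarith [hb i]) fun i _ => by nlinarith [ha i, hb i]
  rw [← mul_prod_erase univ _ (mem_univ i₀), mul_assoc]
  have hb0 : 0 ≤ ∏ i ∈ univ.erase i₀, b i := prod_nonneg fun i _ => (hb i).le
  exact mul_le_mul hbig hsmall (by positivity) (by nlinarith [hb i₀])

theorem tendsto_neg_rpow_div_nhdsGT_zero_atBot {f : ℝ → ℝ} {c α : ℝ} {m : ℕ} (hc : 0 < c)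
    (hα : 0 < α) (hmα : m * α < 1) (hf : ∀ᶠ s in 𝓝[>] 0, c * s ^ m ≤ f s) :
    Tendsto (fun s => -(f s ^ α) / s) (𝓝[>] 0) atBot := by
  have hlim : Tendsto (fun s : ℝ => -(c ^ α * s ^ (m * α - 1))) (𝓝[>] 0) atBot :=
    tendsto_neg_atBot_iff.mpr ((tendsto_rpow_neg_nhdsGT_zero (by linarith)).const_mul_atTop
      (by positivity))
  refine tendsto_atBot_mono' _ ?_ hlim
  filter_upwards [hf, self_mem_nhdsWithin] with s hfs (hs : 0 < s)
  have hpow : (c * s ^ m) ^ α = c ^ α * s ^ (m * α) := by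
    rw [Real.mul_rpow hc.le (by positivity), ← Real.rpow_natCast, ← Real.rpow_mul hs.le]
  have hmono : c ^ α * s ^ (m * α) ≤ f s ^ α :=
    hpow ▸ Real.rpow_le_rpow (by positivity) hfs hα.le
  rw [Real.rpow_sub hs, Real.rpow_one, ← mul_div_assoc, neg_div]
  exact neg_le_neg (div_le_div_of_nonneg_right hmono hs.le)

section Simplex

variable {n : ℕ} {α : ℝ} {p y : EuclideanSpace ℝ (Fin n)}

def openSimplex (n : ℕ) : Set (EuclideanSpace ℝ (Fin n)) := {y | (∀ i, 0 < y i) ∧ ∑ i, y i < 1}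

def baryCoord (y : EuclideanSpace ℝ (Fin n)) : Fin (n + 1) → ℝ :=
  Fin.cons (1 - ∑ i, y i) fun i => y i

noncomputable def baryProd (y : EuclideanSpace ℝ (Fin n)) : ℝ := (1 - ∑ i, y i) * ∏ i, y i

noncomputable def simplexPotential (α : ℝ) (y : EuclideanSpace ℝ (Fin n)) : ℝ := -(baryProd y ^ α)

noncomputable def gradLog (y : EuclideanSpace ℝ (Fin n)) (j : Fin n) : ℝ :=
  (y j)⁻¹ - (1 - ∑ i, y i)⁻¹

lemma neg_simplexPotential (α : ℝ) (y : EuclideanSpace ℝ (Fin n)) :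
    -simplexPotential α y = baryProd y ^ α :=
  neg_neg _

lemma prod_baryCoord (y : EuclideanSpace ℝ (Fin n)) : ∏ k, baryCoord y k = baryProd y :=
  Fin.prod_cons _ _

lemma sum_baryCoord (y : EuclideanSpace ℝ (Fin n)) : ∑ k, baryCoord y k = 1 := by
  simp [baryCoord, Fin.sum_cons]

lemma sum_sq_baryCoord (y : EuclideanSpace ℝ (Fin n)) :
    ∑ k, baryCoord y k ^ 2 = (1 - ∑ i, y i) ^ 2 + ∑ i, y i ^ 2 := by
  simp [baryCoord, Fin.sum_univ_succ]

lemma continuous_baryCoord (k : Fin (n + 1)) :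
    Continuous fun y : EuclideanSpace ℝ (Fin n) => baryCoord y k := by
  cases k using Fin.cases <;> simp only [baryCoord, Fin.cons_zero, Fin.cons_succ] <;> fun_prop

lemma baryCoord_lineMap (s : ℝ) (p y : EuclideanSpace ℝ (Fin n)) (k : Fin (n + 1)) :
    baryCoord ((1 - s) • p + s • y) k = (1 - s) * baryCoord p k + s * baryCoord y k := by
  cases k using Fin.cases
  · simp only [baryCoord, PiLp.add_apply, PiLp.smul_apply, smul_eq_mul, sum_add_distrib,
      ← mul_sum, Fin.cons_zero]
    ring
  · simp [baryCoord]

lemma mem_openSimplex_iff :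
    y ∈ openSimplex n ↔ ∀ k, 0 < baryCoord y k := by
  simp [openSimplex, baryCoord, Fin.forall_fin_succ, and_comm]

lemma isOpen_openSimplex : IsOpen (openSimplex n) := by
  have h : openSimplex n = ⋂ k, {y | 0 < baryCoord y k} :=
    Set.ext fun y => by simp [mem_openSimplex_iff]
  rw [h]
  exact isOpen_iInter_of_finite fun k => isOpen_lt continuous_const (continuous_baryCoord k)

lemma baryCoord_nonneg_of_mem_closure (hp : p ∈ closure (openSimplex n)) (k : Fin (n + 1)) :
    0 ≤ baryCoord p k := by
  have hsub : openSimplex n ⊆ {y | 0 < baryCoord y k} := fun y hy => mem_openSimplex_iff.mp hy k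
  exact closure_lt_subset_le continuous_const (continuous_baryCoord k) (closure_mono hsub hp)

lemma baryProd_eq_zero_of_mem_frontier (hp : p ∈ frontier (openSimplex n)) : baryProd p = 0 := by
  have hpU : p ∉ openSimplex n := by simpa [isOpen_openSimplex.interior_eq] using hp.2
  obtain ⟨k, hk⟩ : ∃ k, baryCoord p k ≤ 0 := by simpa [mem_openSimplex_iff] using hpU
  rw [← prod_baryCoord]
  exact prod_eq_zero (mem_univ k) (hk.antisymm (baryCoord_nonneg_of_mem_closure hp.1 k))

lemma baryProd_pos (hy : y ∈ openSimplex n) : 0 < baryProd y :=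
  mul_pos (by linarith [hy.2]) (prod_pos fun i _ => hy.1 i)

lemma contDiff_baryProd {k : WithTop ℕ∞} : ContDiff ℝ k (baryProd (n := n)) := by
  unfold baryProd
  fun_prop

lemma hasFDerivAt_coord (y : EuclideanSpace ℝ (Fin n)) (k : Fin n) :
    HasFDerivAt (fun z : EuclideanSpace ℝ (Fin n) => z k) (EuclideanSpace.proj (𝕜 := ℝ) k) y :=
  (EuclideanSpace.proj (𝕜 := ℝ) k).hasFDerivAt

lemma hasFDerivAt_one_sub_sum (y : EuclideanSpace ℝ (Fin n)) :
    HasFDerivAt (fun z : EuclideanSpace ℝ (Fin n) => 1 - ∑ i, z i)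
      (-∑ k, EuclideanSpace.proj (𝕜 := ℝ) k) y :=
  (HasFDerivAt.fun_sum fun k _ => hasFDerivAt_coord y k).const_sub 1

lemma fderiv_baryProd_single (hy : y ∈ openSimplex n)
    (j : Fin n) :
    fderiv ℝ baryProd y (EuclideanSpace.single j 1) = baryProd y * gradLog y j := by
  have hprod := HasFDerivAt.finsetProd (u := univ) fun k _ => hasFDerivAt_coord y k
  have h : HasFDerivAt baryProd _ y := (hasFDerivAt_one_sub_sum y).fun_mul hprod
  have hx₀ : 1 - ∑ i, y i ≠ 0 := by linarith [hy.2]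
  have hyj : y j ≠ 0 := (hy.1 j).ne'
  rw [h.fderiv, baryProd, gradLog, ← mul_prod_erase univ (fun i => y i) (mem_univ j)]
  simp only [_root_.add_apply, _root_.smul_apply, _root_.neg_apply, _root_.sum_apply,
    PiLp.proj_apply, PiLp.single_apply, smul_eq_mul, mul_ite, mul_one, mul_zero, sum_ite_eq',
    mem_univ, ↓reduceIte]
  field_simp
  ring

lemma contDiffAt_simplexPotential (hy : y ∈ openSimplex n) :
    ContDiffAt ℝ 2 (simplexPotential α) y :=
  ((Real.contDiffAt_rpow_const_of_ne (baryProd_pos hy).ne').comp y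
    contDiff_baryProd.contDiffAt).neg

lemma fderiv_simplexPotential_single (hy : y ∈ openSimplex n)
    (j : Fin n) :
    fderiv ℝ (simplexPotential α) y (EuclideanSpace.single j 1)
      = α * simplexPotential α y * gradLog y j := by
  have hg := (contDiff_baryProd (n := n) (k := 1)).differentiable one_ne_zero y
  have hne := (baryProd_pos hy).ne'
  have h : HasFDerivAt (simplexPotential α) _ y := (hg.hasFDerivAt.rpow_const (Or.inl hne)).fun_neg
  rw [h.fderiv]
  simp only [_root_.neg_apply, _root_.smul_apply, fderiv_baryProd_single hy, smul_eq_mul,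
    simplexPotential, Real.rpow_sub_one hne]
  field_simp

lemma iteratedFDeriv_simplexPotential_single (hy : y ∈ openSimplex n) (i j : Fin n) :
    iteratedFDeriv ℝ 2 (simplexPotential α) y
        ![EuclideanSpace.single i 1, EuclideanSpace.single j 1]
      = α * -simplexPotential α y * ((if i = j then (y i ^ 2)⁻¹ else 0) + ((1 - ∑ k, y k) ^ 2)⁻¹
          - α * gradLog y i * gradLog y j) := by
  have hx₀ : 1 - ∑ k, y k ≠ 0 := by linarith [hy.2]
  have hw := ((hasDerivAt_inv (hy.1 j).ne').comp_hasFDerivAt y (hasFDerivAt_coord y j)).sub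
    ((hasDerivAt_inv hx₀).comp_hasFDerivAt y (hasFDerivAt_one_sub_sum y))
  have hv := ((contDiffAt_simplexPotential (α := α) hy).differentiableAt two_ne_zero).hasFDerivAt
  rw [iteratedFDeriv_two_apply_eq_of_hasFDerivAt (contDiffAt_simplexPotential hy) ?_
    ((hv.const_mul α).mul hw)]
  · simp only [_root_.add_apply, _root_.smul_apply, _root_.sub_apply, _root_.neg_apply,
      _root_.sum_apply, Pi.sub_apply, Function.comp_apply, PiLp.proj_apply, PiLp.single_apply,
      smul_eq_mul, mul_ite, mul_one, mul_zero, sum_ite_eq', mem_univ, ↓reduceIte,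
      fderiv_simplexPotential_single hy i, gradLog]
    obtain rfl | hij := eq_or_ne i j
    · simp only [↓reduceIte]; ring
    · simp only [if_neg hij, if_neg hij.symm]; ring
  · filter_upwards [isOpen_openSimplex.mem_nhds hy] with z hz
    exact fderiv_simplexPotential_single hz j

lemma hessDet_simplexPotential (hy : y ∈ openSimplex n) :
    hessDet (simplexPotential α) y = (α * -simplexPotential α y) ^ n
      * (α + (1 - (n + 1) * α) * ((1 - ∑ i, y i) ^ 2 + ∑ i, y i ^ 2)) / baryProd y ^ 2 := by
  have hy0 : ∀ i, y i ≠ 0 := fun i => (hy.1 i).ne'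
  have hx₀ : 1 - ∑ i, y i ≠ 0 := by linarith [hy.2]
  have hH : (of fun i j => iteratedFDeriv ℝ 2 (simplexPotential α) y
        ![EuclideanSpace.single i 1, EuclideanSpace.single j 1])
      = (α * -simplexPotential α y) • (diagonal (fun i => (y i ^ 2)⁻¹)
          + vecMulVec (fun _ => (1 - ∑ i, y i)⁻¹) (fun _ => (1 - ∑ i, y i)⁻¹)
          - α • vecMulVec (gradLog y) (gradLog y)) := by
    ext i j
    simp only [of_apply, iteratedFDeriv_simplexPotential_single hy, Matrix.smul_apply,
      Matrix.add_apply, Matrix.sub_apply, diagonal_apply, vecMulVec_apply, smul_eq_mul, ← inv_pow]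
    ring
  rw [hessDet, hH, det_smul, Fintype.card_fin, mul_div_assoc,
    det_diagonal_add_vecMulVec_sub_smul_vecMulVec _ (fun i => by simp [hy0 i])]
  congr 1
  have hA : ∑ i, (1 - ∑ k, y k)⁻¹ ^ 2 / (y i ^ 2)⁻¹ = (∑ i, y i ^ 2) / (1 - ∑ k, y k) ^ 2 := by
    rw [sum_div]; exact sum_congr rfl fun i _ => by field_simp
  have hB : ∑ i, gradLog y i ^ 2 / (y i ^ 2)⁻¹
      = n - 2 / (1 - ∑ k, y k) * ∑ i, y i + 1 / (1 - ∑ k, y k) ^ 2 * ∑ i, y i ^ 2 := by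
    have hterm : ∀ i, gradLog y i ^ 2 / (y i ^ 2)⁻¹
        = 1 - 2 / (1 - ∑ k, y k) * y i + 1 / (1 - ∑ k, y k) ^ 2 * y i ^ 2 := fun i => by
      have := hy0 i; simp only [gradLog]; field_simp; ring
    simp [hterm, sum_add_distrib, sum_sub_distrib, mul_sum]
  have hC : ∑ i, (1 - ∑ k, y k)⁻¹ * gradLog y i / (y i ^ 2)⁻¹
      = 1 / (1 - ∑ k, y k) * ∑ i, y i - 1 / (1 - ∑ k, y k) ^ 2 * ∑ i, y i ^ 2 := by
    rw [mul_sum, mul_sum, ← sum_sub_distrib]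
    exact sum_congr rfl fun i _ => by have := hy0 i; simp only [gradLog]; field_simp
  rw [hA, hB, hC, prod_inv_distrib, prod_pow, baryProd]
  -- only `x₀ + ∑ yᵢ = 1` is left to use, and it is built into `x₀ = 1 - T`
  generalize ∑ i, y i = T at *
  generalize ∏ i, y i = P at *
  field_simp
  ring

lemma hessDet_simplexPotential_eq_rpow {γ : ℝ} (hαγ : α * (n + γ) = 2)
    (hy : y ∈ openSimplex n) :
    hessDet (simplexPotential α) y
      = α ^ n * (α + (1 - (n + 1) * α) * ∑ k, baryCoord y k ^ 2)
          * (-simplexPotential α y) ^ (-γ) := by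
  have hg := baryProd_pos hy
  have hv := neg_simplexPotential α y
  have hsq : (-simplexPotential α y) ^ n * (-simplexPotential α y) ^ γ = baryProd y ^ 2 := by
    rw [hv, ← Real.rpow_natCast, ← Real.rpow_mul hg.le, ← Real.rpow_mul hg.le,
      ← Real.rpow_add hg, ← mul_add, hαγ, Real.rpow_two]
  rw [hessDet_simplexPotential hy, sum_sq_baryCoord, ← hsq, Real.rpow_neg (by rw [hv]; positivity)]
  have : (-simplexPotential α y) ^ n ≠ 0 := by rw [hv]; positivity
  field_simp
  ring

lemma hessDet_simplexPotential_mem_Icc {γ : ℝ} (hα : 0 < α) (hαγ : α * (n + γ) = 2)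
    (hy : y ∈ openSimplex n) :
    hessDet (simplexPotential α) y
      ∈ Set.Icc (α ^ n * min α (1 - n * α) * (-simplexPotential α y) ^ (-γ))
      (α ^ n * max α (1 - n * α) * (-simplexPotential α y) ^ (-γ)) := by
  have hb := mem_openSimplex_iff.mp hy
  set σ := ∑ k, baryCoord y k ^ 2
  have hσ0 : 0 ≤ σ := sum_nonneg fun k _ => sq_nonneg _
  have hσ1 : σ ≤ 1 := (sum_sq_le_sq_sum_of_nonneg fun k _ => (hb k).le).trans_eq
    (by rw [sum_baryCoord, one_pow])
  have hcombo : α + (1 - (n + 1) * α) * σ = (1 - σ) • α + σ • (1 - n * α) := by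
    simp only [smul_eq_mul]; ring
  have hr : 0 ≤ (-simplexPotential α y) ^ (-γ) := by
    rw [neg_simplexPotential]
    exact Real.rpow_nonneg (Real.rpow_nonneg (baryProd_pos hy).le α) _
  rw [hessDet_simplexPotential_eq_rpow hαγ hy, hcombo]
  constructor <;> gcongr
  exacts [Convex.min_le_combo _ _ (by linarith) hσ0 (by ring),
    Convex.combo_le_max _ _ (by linarith) hσ0 (by ring)]

lemma tendsto_slope_simplexPotential_atBot (hα : 0 < α) (hnα : n * α < 1)
    (hp : p ∈ frontier (openSimplex n)) (hy : y ∈ openSimplex n) :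
    Tendsto (fun s => (simplexPotential α ((1 - s) • p + s • y) - simplexPotential α p) / s)
      (𝓝[>] 0) atBot := by
  obtain ⟨k, -, hk⟩ : ∃ k ∈ univ, 0 < baryCoord p k :=
    exists_lt_of_sum_lt (by simp [sum_baryCoord])
  obtain ⟨c, hc, hbound⟩ := exists_pos_mul_pow_le_prod_lineMap
    (baryCoord_nonneg_of_mem_closure hp.1) hk (mem_openSimplex_iff.mp hy)
  have hnear : ∀ᶠ s in 𝓝[>] (0 : ℝ), c * s ^ n ≤ baryProd ((1 - s) • p + s • y) := by
    filter_upwards [Ioc_mem_nhdsGT (show (0 : ℝ) < 1 / 2 by norm_num)] with s hs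
    simpa [← prod_baryCoord, baryCoord_lineMap] using hbound s (Set.Ioc_subset_Icc_self hs)
  simpa [simplexPotential, baryProd_eq_zero_of_mem_frontier hp, Real.zero_rpow hα.ne'] using
    tendsto_neg_rpow_div_nhdsGT_zero_atBot hc hα hnα hnear

end Simplex

theorem stmt_10_general (n : ℕ) (γ : ℝ) (hγ : (n : ℝ) < γ)
    (v : EuclideanSpace ℝ (Fin n) → ℝ)
    (hv : ∀ x : EuclideanSpace ℝ (Fin n),
      v x = -(((1 - ∑ i, x i) * ∏ i, x i) ^ (2 / ((n : ℝ) + γ)))) :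
    (∃ C₁ > (0 : ℝ), ∃ C₂ > (0 : ℝ),
      ∀ x ∈ {y : EuclideanSpace ℝ (Fin n) | (∀ i, 0 < y i) ∧ ∑ i, y i < 1},
        C₁ * (-v x) ^ (-γ) ≤ hessDet v x ∧ hessDet v x ≤ C₂ * (-v x) ^ (-γ)) ∧
    (∀ p ∈ frontier {y : EuclideanSpace ℝ (Fin n) | (∀ i, 0 < y i) ∧ ∑ i, y i < 1},
      ∀ y ∈ {y : EuclideanSpace ℝ (Fin n) | (∀ i, 0 < y i) ∧ ∑ i, y i < 1},
        Filter.Tendsto (fun s : ℝ => (v ((1 - s) • p + s • y) - v p) / s)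
          (nhdsWithin 0 (Set.Ioi 0)) Filter.atBot) := by
  set α := 2 / ((n : ℝ) + γ)
  have hnγ : 0 < (n : ℝ) + γ := by linarith [n.cast_nonneg (α := ℝ)]
  have hα : 0 < α := by positivity
  have hαγ : α * (n + γ) = 2 := div_mul_cancel₀ _ hnγ.ne'
  have hnα : n * α < 1 := by
    rw [mul_div_assoc', div_lt_one hnγ]
    linarith
  obtain rfl : v = simplexPotential α := funext hv
  refine ⟨⟨α ^ n * min α (1 - n * α), by positivity, α ^ n * max α (1 - n * α), by positivity,
    fun x hx => hessDet_simplexPotential_mem_Icc hα hαγ hx⟩,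
    fun p hp y hy => tendsto_slope_simplexPotential_atBot hα hnα hp hy⟩

/-- For `γ > n`, on the standard open simplex `Δ`, the function
`v(x) = -(x₀x₁⋯xₙ)^(2/(n+γ))` satisfies `C₁(-v)^(-γ) ≤ det D²v ≤ C₂(-v)^(-γ)` in `Δ`
for constants `C₁, C₂ > 0` depending only on `n, γ`, and `v` has infinite slope at
every boundary point of `Δ`. -/
theorem stmt_10 (n : ℕ) (hn : 1 ≤ n) (γ : ℝ) (hγ : (n : ℝ) < γ)
    (v : EuclideanSpace ℝ (Fin n) → ℝ)
    (hv : ∀ x : EuclideanSpace ℝ (Fin n),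
      v x = -(((1 - ∑ i, x i) * ∏ i, x i) ^ (2 / ((n : ℝ) + γ)))) :
    (∃ C₁ > (0 : ℝ), ∃ C₂ > (0 : ℝ),
      ∀ x ∈ {y : EuclideanSpace ℝ (Fin n) | (∀ i, 0 < y i) ∧ ∑ i, y i < 1},
        C₁ * (-v x) ^ (-γ) ≤ hessDet v x ∧ hessDet v x ≤ C₂ * (-v x) ^ (-γ)) ∧
    (∀ p ∈ frontier {y : EuclideanSpace ℝ (Fin n) | (∀ i, 0 < y i) ∧ ∑ i, y i < 1},
      ∀ y ∈ {y : EuclideanSpace ℝ (Fin n) | (∀ i, 0 < y i) ∧ ∑ i, y i < 1},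
        Filter.Tendsto (fun s : ℝ => (v ((1 - s) • p + s • y) - v p) / s)
          (nhdsWithin 0 (Set.Ioi 0)) Filter.atBot) :=
  stmt_10_general n γ hγ v hv
end

section
/- Let Ω ⊂ ℝⁿ be a bounded convex domain, γ > n, and w a convex generalized solution of det D²w = (-w)^(-γ) in Ω with w = 0 on ∂Ω. Then w has infinite slope at every point of ∂Ω. -/
open MeasureTheory RealInnerProductSpace
open Metric
set_option maxHeartbeats 2000000

/-- Monge–Ampère measure (Alexandrov sense) of a convex function `u` relative to `Ω`. -/
noncomputable def MAMeasure {n : ℕ} (Ω : Set (EuclideanSpace ℝ (Fin n)))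
    (u : EuclideanSpace ℝ (Fin n) → ℝ) (A : Set (EuclideanSpace ℝ (Fin n))) : ENNReal :=
  volume {p : EuclideanSpace ℝ (Fin n) | ∃ x ∈ A, ∀ y ∈ Ω, u x + ⟪p, y - x⟫ ≤ u y}

/-- `u` admits a subgradient at `p` relative to `closure Ω` (finite slope at `p`). -/
def HasSubgradAt {n : ℕ} (Ω : Set (EuclideanSpace ℝ (Fin n)))
    (u : EuclideanSpace ℝ (Fin n) → ℝ) (p : EuclideanSpace ℝ (Fin n)) : Prop :=
  ∃ q : EuclideanSpace ℝ (Fin n), ∀ y ∈ closure Ω, u p + ⟪q, y - p⟫ ≤ u y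

/-- `w` is a convex generalized solution of `det D²w = (-w)^(-γ)` in `Ω`, `w = 0`
on `∂Ω`. -/
def IsGenSolution {n : ℕ} (Ω : Set (EuclideanSpace ℝ (Fin n))) (γ : ℝ)
    (w : EuclideanSpace ℝ (Fin n) → ℝ) : Prop :=
  ConvexOn ℝ (closure Ω) w ∧ ContinuousOn w (closure Ω) ∧
    (∀ p ∈ frontier Ω, w p = 0) ∧ (∀ x ∈ Ω, w x < 0) ∧
    ∀ A : Set (EuclideanSpace ℝ (Fin n)), MeasurableSet A → A ⊆ Ω →
      MAMeasure Ω w A = ∫⁻ x in A, ENNReal.ofReal ((-w x) ^ (-γ))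

/-- For `γ > n`, any convex generalized solution of
`det D²w = (-w)^(-γ)`, `w|∂Ω = 0`, has infinite slope (no subgradient) at every point
of `∂Ω`. -/
theorem stmt_14 (n : ℕ) (hn : 1 ≤ n) (Ω : Set (EuclideanSpace ℝ (Fin n)))
    (hΩo : IsOpen Ω) (hΩc : Convex ℝ Ω) (hΩb : Bornology.IsBounded Ω)
    (hΩne : Ω.Nonempty) (γ : ℝ) (hγ : (n : ℝ) < γ)
    (w : EuclideanSpace ℝ (Fin n) → ℝ) (hw : IsGenSolution Ω γ w) :
    ∀ p ∈ frontier Ω, ¬ HasSubgradAt Ω w p := by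
  rintro p hp ⟨q, hq⟩
  obtain ⟨hwconv, hwcont, hwbd, hwneg, hweq⟩ := hw
  haveI : Nonempty (Fin n) := Fin.pos_iff_nonempty.mp hn
  have hpc : p ∈ closure Ω := frontier_subset_closure hp
  have hpn : p ∉ Ω := by
    rw [hΩo.frontier_eq] at hp
    exact hp.2
  have wp0 : w p = 0 := hwbd p hp
  -- the "distance to supporting hyperplane" function
  set h : EuclideanSpace ℝ (Fin n) → ℝ := fun y => ⟪q, p - y⟫ with hh
  have hwh : ∀ y ∈ closure Ω, -w y ≤ h y := by
    intro y hy
    have := hq y hy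
    rw [wp0, zero_add] at this
    have h1 : ⟪q, y - p⟫ = -h y := by
      simp only [hh]
      rw [← inner_neg_right, neg_sub]
    linarith [h1 ▸ this]
  -- pick an interior ball
  obtain ⟨x0, hx0⟩ := hΩne
  obtain ⟨ε, hε, hball⟩ := Metric.isOpen_iff.mp hΩo x0 hx0
  set ρ : ℝ := ε / 3 with hρdef
  have hρ : 0 < ρ := by positivity
  have h2ρ : ball x0 (2 * ρ) ⊆ Ω := by
    refine subset_trans (ball_subset_ball ?_) hball
    rw [hρdef]; linarith
  -- bound for h on the double ball
  set b : ℝ := h x0 + ‖q‖ * (2 * ρ) + 1 with hbdef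
  have hhb : ∀ v ∈ ball x0 (2 * ρ), h v ≤ b := by
    intro v hv
    have h1 : h v = h x0 + ⟪q, x0 - v⟫ := by
      simp only [hh]
      rw [← inner_add_right]
      congr 1
      abel
    have h2 : ⟪q, x0 - v⟫ ≤ ‖q‖ * ‖x0 - v‖ := real_inner_le_norm q _
    have h3 : ‖x0 - v‖ ≤ 2 * ρ := by
      rw [← dist_eq_norm]
      rw [dist_comm]
      exact le_of_lt (mem_ball.mp hv)
    nlinarith [norm_nonneg q]
  have hb0 : 0 < b := by
    have h1 : -w x0 ≤ h x0 := hwh x0 (subset_closure hx0)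
    have h2 : w x0 < 0 := hwneg x0 hx0
    nlinarith [norm_nonneg q, hρ]
  -- cone point membership
  have hcone : ∀ v ∈ Ω, ∀ s : ℝ, 0 < s → s ≤ 1 → p + s • (v - p) ∈ Ω := by
    intro v hv s hs hs1
    have := hΩc.combo_interior_closure_mem_interior
      (x := v) (y := p) (a := s) (b := 1 - s)
      (by rwa [hΩo.interior_eq]) hpc hs (by linarith) (by ring)
    rw [hΩo.interior_eq] at this
    convert this using 1
    module
  have hconeh : ∀ (v : EuclideanSpace ℝ (Fin n)) (s : ℝ), h (p + s • (v - p)) = s * h v := by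
    intro v s
    simp only [hh]
    have : p - (p + s • (v - p)) = s • (p - v) := by module
    rw [this, real_inner_smul_right]
  -- the test set
  set K : Set (EuclideanSpace ℝ (Fin n)) :=
    (fun sz : ℝ × EuclideanSpace ℝ (Fin n) => p + sz.1 • (sz.2 - p)) ''
      (Set.Icc (0:ℝ) 1 ×ˢ closedBall x0 ρ) with hK
  have hKcomp : IsCompact K := by
    apply IsCompact.image (isCompact_Icc.prod (isCompact_closedBall x0 ρ))
    fun_prop
  set A : Set (EuclideanSpace ℝ (Fin n)) := K ∩ Ω with hA
  have hAmeas : MeasurableSet A := hKcomp.isClosed.measurableSet.inter hΩo.measurableSet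
  have hAsub : A ⊆ Ω := Set.inter_subset_right
  -- structure of points of A
  have hAstruct : ∀ x ∈ A, ∃ s : ℝ, 0 < s ∧ s ≤ 1 ∧
      ∃ z ∈ closedBall x0 ρ, x = p + s • (z - p) := by
    rintro x ⟨⟨⟨s, z⟩, ⟨hs, hz⟩, rfl⟩, hxΩ⟩
    simp only at hs hz hxΩ
    rcases eq_or_lt_of_le hs.1 with h0 | h0
    · exfalso
      apply hpn
      rw [← h0, zero_smul, add_zero] at hxΩ
      exact hxΩ
    · exact ⟨s, h0, hs.2, z, hz, rfl⟩
  -- slope bound: the normal image of A is contained in a fixed closed ball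
  have hslope : {σ : EuclideanSpace ℝ (Fin n) |
      ∃ x ∈ A, ∀ y ∈ Ω, w x + ⟪σ, y - x⟫ ≤ w y} ⊆ closedBall 0 (2 * b / ρ) := by
    rintro σ ⟨x, hxA, hsup⟩
    obtain ⟨s, hs0, hs1, z, hz, rfl⟩ := hAstruct x hxA
    rcases eq_or_ne σ 0 with rfl | hσ
    · simp [mem_closedBall]
      positivity
    · set u : EuclideanSpace ℝ (Fin n) := (ρ / 2) • ‖σ‖⁻¹ • σ with hu
      have hun : ‖u‖ = ρ / 2 := by
        rw [hu, norm_smul, norm_smul, norm_inv, norm_norm,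
          inv_mul_cancel₀ (norm_ne_zero_iff.mpr hσ), mul_one, Real.norm_eq_abs,
          abs_of_pos (by positivity : (0:ℝ) < ρ / 2)]
      have hzu : z + u ∈ Ω := by
        apply h2ρ
        rw [mem_ball]
        calc dist (z + u) x0 ≤ dist (z + u) z + dist z x0 := dist_triangle _ _ _
          _ ≤ ρ / 2 + ρ := by
              gcongr
              · rw [dist_eq_norm, add_sub_cancel_left, hun]
              · exact mem_closedBall.mp hz
          _ < 2 * ρ := by linarith
      have hyΩ : p + s • ((z + u) - p) ∈ Ω := hcone _ hzu s hs0 hs1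
      have hkey := hsup _ hyΩ
      have hdiff : p + s • ((z + u) - p) - (p + s • (z - p)) = s • u := by module
      rw [hdiff] at hkey
      have hinner : ⟪σ, s • u⟫ = s * ((ρ / 2) * ‖σ‖) := by
        rw [real_inner_smul_right, hu, real_inner_smul_right, real_inner_smul_right,
          real_inner_self_eq_norm_sq]
        field_simp [norm_ne_zero_iff.mpr hσ]
      -- -w x ≤ h x = s * h z ≤ s * b
      have hx1 : -w (p + s • (z - p)) ≤ s * b := by
        have := hwh _ (subset_closure (hAsub hxA))
        rw [hconeh z s] at this
        have hzb : h z ≤ b := hhb z (by rw [mem_ball]; exact lt_of_le_of_lt (mem_closedBall.mp hz) (by linarith))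
        nlinarith
      have hwy : w (p + s • ((z + u) - p)) < 0 := hwneg _ hyΩ
      rw [hinner] at hkey
      have : s * ((ρ / 2) * ‖σ‖) ≤ s * b := by nlinarith
      have hσb : ‖σ‖ ≤ 2 * b / ρ := by
        rw [le_div_iff₀ hρ]
        nlinarith
      rwa [mem_closedBall, dist_zero_right]
  -- MA measure of A is finite
  set V : ENNReal := volume (closedBall (0 : EuclideanSpace ℝ (Fin n)) (2 * b / ρ)) with hV
  have hVfin : V < ⊤ := measure_closedBall_lt_top
  have hMA := hweq A hAmeas hAsub
  have hIle : (∫⁻ x in A, ENNReal.ofReal ((-w x) ^ (-γ))) ≤ V := by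
    rw [← hMA]
    exact measure_mono hslope
  -- lower bounds on the integral via small balls
  set c1 : ENNReal := volume (ball (0 : EuclideanSpace ℝ (Fin n)) 1) with hc1
  have hc10 : c1 ≠ 0 := (measure_ball_pos volume 0 one_pos).ne'
  have hc1top : c1 ≠ ⊤ := measure_ball_lt_top.ne
  have hlower : ∀ s : ℝ, 0 < s → s ≤ 1 →
      ENNReal.ofReal ((s * b) ^ (-γ)) * (ENNReal.ofReal ((s * ρ) ^ n) * c1) ≤ V := by
    intro s hs0 hs1
    set c : EuclideanSpace ℝ (Fin n) := p + s • (x0 - p) with hc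
    have hDsub : ∀ y ∈ ball c (s * ρ), y ∈ A ∧ -w y ≤ s * b ∧ 0 < -w y := by
      intro y hy
      set v : EuclideanSpace ℝ (Fin n) := x0 + s⁻¹ • (y - c) with hv
      have key : s • (s⁻¹ • (y - c)) = y - c := by
        rw [smul_smul, mul_inv_cancel₀ hs0.ne', one_smul]
      have hyv : y = p + s • (v - p) := by
        have h1 : s • (v - p) = s • (x0 - p) + s • (s⁻¹ • (y - c)) := by
          rw [hv]; module
        rw [key] at h1
        rw [h1, hc]
        abel
      have hvx0 : ‖v - x0‖ < ρ := by
        have h1 : v - x0 = s⁻¹ • (y - c) := by rw [hv]; abel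
        have h2 : ‖y - c‖ < s * ρ := by
          rw [← dist_eq_norm]; exact mem_ball.mp hy
        rw [h1, norm_smul, Real.norm_eq_abs, abs_of_pos (inv_pos.mpr hs0)]
        calc s⁻¹ * ‖y - c‖ < s⁻¹ * (s * ρ) := by
              apply mul_lt_mul_of_pos_left h2 (inv_pos.mpr hs0)
          _ = ρ := by field_simp
      have hv2ρ : v ∈ ball x0 (2 * ρ) := by
        rw [mem_ball, dist_eq_norm]
        calc ‖v - x0‖ < ρ := hvx0
          _ < 2 * ρ := by linarith
      have hvΩ : v ∈ Ω := h2ρ hv2ρ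
      have hyΩ : y ∈ Ω := by rw [hyv]; exact hcone v hvΩ s hs0 hs1
      have hyK : y ∈ K := by
        refine ⟨(s, v), ⟨⟨hs0.le, hs1⟩, ?_⟩, hyv.symm⟩
        exact mem_closedBall.mpr (by rw [dist_eq_norm]; exact hvx0.le)
      refine ⟨⟨hyK, hyΩ⟩, ?_, by linarith [hwneg y hyΩ]⟩
      have h1 : -w y ≤ h y := hwh y (subset_closure hyΩ)
      have h2 : h y = s * h v := by rw [hyv, hconeh]
      have h3 : h v ≤ b := hhb v hv2ρ
      nlinarith
    have hptwise : ∀ y ∈ ball c (s * ρ),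
        ENNReal.ofReal ((s * b) ^ (-γ)) ≤ ENNReal.ofReal ((-w y) ^ (-γ)) := by
      intro y hy
      obtain ⟨-, hyb, hy0⟩ := hDsub y hy
      apply ENNReal.ofReal_le_ofReal
      exact Real.rpow_le_rpow_of_nonpos hy0 hyb (by linarith [Nat.cast_nonneg (α := ℝ) n])
    calc ENNReal.ofReal ((s * b) ^ (-γ)) * (ENNReal.ofReal ((s * ρ) ^ n) * c1)
        = ENNReal.ofReal ((s * b) ^ (-γ)) * volume (ball c (s * ρ)) := by
          rw [Measure.addHaar_ball volume c (by positivity : (0:ℝ) ≤ s * ρ),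
            finrank_euclideanSpace_fin, ← hc1]
      _ = ∫⁻ _ in ball c (s * ρ), ENNReal.ofReal ((s * b) ^ (-γ)) := by
          rw [setLIntegral_const]
      _ ≤ ∫⁻ y in ball c (s * ρ), ENNReal.ofReal ((-w y) ^ (-γ)) :=
          setLIntegral_mono' measurableSet_ball hptwise
      _ ≤ ∫⁻ x in A, ENNReal.ofReal ((-w x) ^ (-γ)) :=
          lintegral_mono_set (fun y hy => (hDsub y hy).1)
      _ ≤ V := hIle
  -- final contradiction
  set δ : ℝ := γ - n with hδdef
  have hδ : 0 < δ := by simp only [hδdef]; linarith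
  set C : ENNReal := ENNReal.ofReal (b ^ (-γ) * ρ ^ n) * c1 with hC
  have hC0 : C ≠ 0 := mul_ne_zero (ENNReal.ofReal_pos.mpr
    (mul_pos (Real.rpow_pos_of_pos hb0 _) (pow_pos hρ n))).ne' hc10
  have hCtop : C ≠ ⊤ := ENNReal.mul_ne_top ENNReal.ofReal_ne_top hc1top
  have hlower2 : ∀ s : ℝ, 0 < s → s ≤ 1 →
      ENNReal.ofReal (s ^ ((n : ℝ) - γ)) * C ≤ V := by
    intro s hs0 hs1
    have h0 := hlower s hs0 hs1
    have hre : (s * b) ^ (-γ) * (s * ρ) ^ n = s ^ ((n : ℝ) - γ) * (b ^ (-γ) * ρ ^ n) := by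
      rw [Real.mul_rpow hs0.le hb0.le, mul_pow]
      have h1 : s ^ ((n : ℝ) - γ) = s ^ (n : ℝ) * s ^ (-γ) := by
        rw [← Real.rpow_add hs0]
        congr 1
        try ring
      rw [h1, ← Real.rpow_natCast s n]
      ring
    calc ENNReal.ofReal (s ^ ((n : ℝ) - γ)) * C
        = ENNReal.ofReal (s ^ ((n : ℝ) - γ) * (b ^ (-γ) * ρ ^ n)) * c1 := by
          rw [hC, ← mul_assoc, ← ENNReal.ofReal_mul
            (Real.rpow_nonneg hs0.le _)]
      _ = ENNReal.ofReal ((s * b) ^ (-γ) * (s * ρ) ^ n) * c1 := by rw [hre]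
      _ = ENNReal.ofReal ((s * b) ^ (-γ)) * (ENNReal.ofReal ((s * ρ) ^ n) * c1) := by
          rw [ENNReal.ofReal_mul (Real.rpow_nonneg (by positivity) _), mul_assoc]
      _ ≤ V := h0
  set T : ℝ := (V / C).toReal + 1 with hT
  have hT1 : 1 ≤ T := by
    rw [hT]
    have : 0 ≤ (V / C).toReal := ENNReal.toReal_nonneg
    linarith
  set t : ℝ := T ^ (-δ⁻¹) with ht
  have ht0 : 0 < t := Real.rpow_pos_of_pos (by linarith) _
  have ht1 : t ≤ 1 := Real.rpow_le_one_of_one_le_of_nonpos hT1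
    (neg_nonpos.mpr (inv_nonneg.mpr hδ.le))
  have htpow : t ^ ((n : ℝ) - γ) = T := by
    rw [ht, ← Real.rpow_mul (by linarith : (0:ℝ) ≤ T)]
    have : -δ⁻¹ * ((n : ℝ) - γ) = 1 := by
      have h1 : (n : ℝ) - γ = -δ := by rw [hδdef]; ring
      rw [h1]
      field_simp
    rw [this, Real.rpow_one]
  have hfin := hlower2 t ht0 ht1
  rw [htpow] at hfin
  have h1 : ENNReal.ofReal T ≤ V / C :=
    (ENNReal.le_div_iff_mul_le (Or.inl hC0) (Or.inl hCtop)).mpr hfin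
  have hVC : V / C ≠ ⊤ := (ENNReal.div_lt_top hVfin.ne hC0).ne
  have h2 : T ≤ (V / C).toReal := by
    calc T = (ENNReal.ofReal T).toReal := (ENNReal.toReal_ofReal (by linarith)).symm
      _ ≤ (V / C).toReal := ENNReal.toReal_mono hVC h1
  rw [hT] at h2
  linarith
end

section
/- Let Ω ⊂ ℝⁿ be a bounded convex domain, φ : ∂Ω → ℝ ∪ {+∞} lower semicontinuous, bounded below, not identically +∞, and restricting to a convex function on every line segment in ∂Ω. If u : Ω → ℝ is a strictly convex function with boundary value u|∂Ω ≤ φ, then u(x) < env(φ)(x) for every x ∈ Ω, where env(φ) is the convex envelope of φ. -/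
/-!
Take a supporting hyperplane `L` of `u` at `x`, so that `v = u - L` attains its minimum on `Ω`
at `x`, strictly by strict convexity. On the compact set of midpoints between `x` and `∂Ω` the
function `v` exceeds `v x` by some `ε > 0`, and since `v` is nondecreasing along rays leaving
its minimum, the same bound holds on every ray from `∂Ω` to `x` up to the midpoint. Hence
`L + v x + ε` lies below the boundary values of `u`, so below `φ`, and it exceeds `u` at `x`.
-/

open Filter

/-- The convex envelope (with values in `EReal`) of `φ : ∂Ω → ℝ ∪ {+∞}` at `x`:
the supremum of `a(x)` over affine functions `a` with `a ≤ φ` on `∂Ω`. -/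
noncomputable def convEnvE {n : ℕ} (Ω : Set (EuclideanSpace ℝ (Fin n)))
    (φ : EuclideanSpace ℝ (Fin n) → EReal) (x : EuclideanSpace ℝ (Fin n)) : EReal :=
  sSup {y : EReal | ∃ (L : EuclideanSpace ℝ (Fin n) →L[ℝ] ℝ) (c : ℝ),
    (∀ p ∈ frontier Ω, ((L p + c : ℝ) : EReal) ≤ φ p) ∧ y = ((L x + c : ℝ) : EReal)}

open Set Topology

lemma ContinuousOn.isOpen_strictEpigraph {E : Type*} [TopologicalSpace E] {Ω : Set E}
    {u : E → ℝ} (hΩ : IsOpen Ω) (hu : ContinuousOn u Ω) :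
    IsOpen {q : E × ℝ | q.1 ∈ Ω ∧ u q.1 < q.2} := by
  have hcont : ContinuousOn (fun q : E × ℝ => q.2 - u q.1) (Ω ×ˢ univ) :=
    continuousOn_snd.sub (hu.comp continuousOn_fst fun _ hq => hq.1)
  convert hcont.isOpen_inter_preimage (hΩ.prod isOpen_univ) isOpen_Ioi (t := Ioi 0) using 1
  ext q
  simp

lemma ConvexOn.exists_isMinOn_sub_clm {E : Type*} [NormedAddCommGroup E] [NormedSpace ℝ E]
    {Ω : Set E} {u : E → ℝ} (hΩ : IsOpen Ω) (hu : ConvexOn ℝ Ω u) (hcont : ContinuousOn u Ω)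
    {x : E} (hx : x ∈ Ω) :
    ∃ L : StrongDual ℝ E, IsMinOn (fun y => u y - L y) Ω x := by
  obtain ⟨f, hf⟩ := geometric_hahn_banach_open_point hu.convex_strict_epigraph
    (hcont.isOpen_strictEpigraph hΩ) (x := (x, u x)) fun h => lt_irrefl _ h.2
  have hsplit : ∀ y t, f (y, t) = f (y, 0) + t * f (0, 1) := fun y t => by
    rw [← smul_eq_mul, ← map_smul, ← map_add]
    simp
  have hneg : f (0, 1) < 0 := by
    have := hf (x, u x + 1) ⟨hx, lt_add_one _⟩
    rw [hsplit x (u x + 1), hsplit x (u x)] at this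
    linarith
  -- let `t ↓ u y` in the separation inequality at `(y, t)`
  have hgraph : ∀ y ∈ Ω, f (y, u y) ≤ f (x, u x) := fun y hy =>
    le_of_tendsto (((f.continuous.comp (Continuous.prodMk_right y)).tendsto (u y)).mono_left
      nhdsWithin_le_nhds)
      (eventually_nhdsWithin_of_forall (s := Ioi (u y)) fun t ht => (hf (y, t) ⟨hy, ht⟩).le)
  refine ⟨-(f (0, 1))⁻¹ • f.comp (ContinuousLinearMap.inl ℝ E ℝ), fun y hy => ?_⟩
  have hval : ∀ z, u z - (-(f (0, 1))⁻¹ • f.comp (ContinuousLinearMap.inl ℝ E ℝ)) z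
      = f (z, u z) / f (0, 1) := fun z => by
    have : f (0, 1) ≠ 0 := hneg.ne
    simp only [smul_apply, ContinuousLinearMap.comp_apply, ContinuousLinearMap.inl_apply,
      smul_eq_mul, hsplit z (u z)]
    field_simp
    ring
  simp only [mem_ofPred_eq, hval]
  exact div_le_div_of_nonpos_of_le hneg.le (hgraph y hy)

lemma StrictConvexOn.lt_of_isMinOn {𝕜 E β : Type*} [Field 𝕜] [LinearOrder 𝕜]
    [IsStrictOrderedRing 𝕜] [AddCommMonoid E] [SMul 𝕜 E] [AddCommMonoid β] [PartialOrder β]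
    [IsOrderedAddMonoid β] [Module 𝕜 β] [PosSMulMono 𝕜 β] {s : Set E} {f : E → β} {x : E}
    (hf : StrictConvexOn 𝕜 s f) (hfx : IsMinOn f s x) (hx : x ∈ s) :
    ∀ y ∈ s, y ≠ x → f x < f y := by
  intro y hy hyx
  refine lt_of_le_of_ne (hfx hy) fun hxy => hyx ?_
  exact hf.eq_of_isMinOn (fun z hz => hxy ▸ hfx hz) hfx hy hx

lemma combo_mem_segment_combo {E : Type*} [AddCommGroup E] [Module ℝ E] (p x : E) {s t : ℝ}
    (hst : s ≤ t) (ht : t ≤ 1) (hs : s < 1) :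
    (1 - t) • p + t • x ∈ segment ℝ x ((1 - s) • p + s • x) := by
  have h1s : 0 < 1 - s := by linarith
  refine ⟨(t - s) / (1 - s), (1 - t) / (1 - s), div_nonneg (by linarith) h1s.le,
    div_nonneg (by linarith) h1s.le, by field_simp; ring, ?_⟩
  match_scalars <;> field_simp
  ring

lemma Convex.combo_mem_of_mem_closure {E : Type*} [NormedAddCommGroup E] [NormedSpace ℝ E]
    {Ω : Set E} (hΩ : Convex ℝ Ω) (hΩo : IsOpen Ω) {p x : E} (hp : p ∈ closure Ω) (hx : x ∈ Ω)
    {s : ℝ} (hs : s ∈ Ioc (0 : ℝ) 1) : (1 - s) • p + s • x ∈ Ω := by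
  have := hΩ.combo_closure_interior_mem_interior hp (hΩo.interior_eq ▸ hx) (sub_nonneg.2 hs.2)
    hs.1 (sub_add_cancel 1 s)
  rwa [hΩo.interior_eq] at this

lemma ConvexOn.exists_pos_add_le_of_mem_frontier {E : Type*} [NormedAddCommGroup E]
    [NormedSpace ℝ E] [ProperSpace E] {Ω : Set E} {v : E → ℝ} {x : E} (hΩo : IsOpen Ω)
    (hΩb : Bornology.IsBounded Ω) (hv : ConvexOn ℝ Ω v) (hvc : ContinuousOn v Ω) (hx : x ∈ Ω)
    (hmin : ∀ y ∈ Ω, y ≠ x → v x < v y) :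
    ∃ ε > 0, ∀ p ∈ frontier Ω, ∀ s ∈ Ioc (0 : ℝ) (1 / 2), v x + ε ≤ v ((1 - s) • p + s • x) := by
  have hmem : ∀ p ∈ frontier Ω, ∀ s ∈ Ioc (0 : ℝ) 1, (1 - s) • p + s • x ∈ Ω := fun p hp s hs =>
    hv.1.combo_mem_of_mem_closure hΩo (frontier_subset_closure hp) hx hs
  have hle : ∀ y ∈ Ω, v x ≤ v y := fun y hy =>
    (eq_or_ne y x).elim (fun h => h ▸ le_rfl) fun h => (hmin y hy h).le
  let half : E → E := fun p => (1 - 1 / 2 : ℝ) • p + (1 / 2 : ℝ) • x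
  have hK : IsCompact (half '' frontier Ω) :=
    (Metric.isCompact_of_isClosed_isBounded isClosed_frontier
      (hΩb.closure.subset frontier_subset_closure)).image (by fun_prop)
  have hKΩ : half '' frontier Ω ⊆ Ω := by
    rintro _ ⟨p, hp, rfl⟩
    exact hmem p hp (1 / 2) ⟨one_half_pos, by norm_num⟩
  have hKx : ∀ z ∈ half '' frontier Ω, v x < v z := by
    rintro _ ⟨p, hp, rfl⟩
    refine hmin _ (hKΩ ⟨p, hp, rfl⟩) fun h => ?_
    have hpx : p = x := by linear_combination (norm := module) (2 : ℝ) • h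
    exact (hΩo.inter_frontier_eq.subset ⟨hpx ▸ hx, hp⟩).elim
  obtain ⟨a, hxa, ha⟩ := hK.exists_forall_le' (hvc.mono hKΩ) hKx
  refine ⟨a - v x, sub_pos.2 hxa, fun p hp s hs => ?_⟩
  have hw := hmem p hp s ⟨hs.1, hs.2.trans (by norm_num)⟩
  calc v x + (a - v x) = a := add_sub_cancel _ _
    _ ≤ v (half p) := ha _ ⟨p, hp, rfl⟩
    _ ≤ max (v x) (v ((1 - s) • p + s • x)) :=
        hv.le_max_of_mem_segment hx hw (combo_mem_segment_combo p x hs.2 (by norm_num)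
          (hs.2.trans_lt (by norm_num)))
    _ = v ((1 - s) • p + s • x) := max_eq_right (hle _ hw)

lemma tendsto_combo_nhdsGT_zero {E : Type*} [NormedAddCommGroup E] [NormedSpace ℝ E] (p x : E) :
    Tendsto (fun s : ℝ => (1 - s) • p + s • x) (𝓝[>] 0) (𝓝 p) := by
  have : Continuous (fun s : ℝ => (1 - s) • p + s • x) := by fun_prop
  exact (this.tendsto' 0 p (by simp)).mono_left nhdsWithin_le_nhds

lemma Filter.Tendsto.coe_le_liminf_of_eventually_le {α : Type*} {l : Filter α} [l.NeBot]
    {f g : α → ℝ} {b : ℝ} (hf : Tendsto f l (𝓝 b)) (hfg : ∀ᶠ t in l, f t ≤ g t) :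
    (b : EReal) ≤ liminf (fun t => (g t : EReal)) l :=
  calc (b : EReal) = liminf (fun t => (f t : EReal)) l :=
        ((continuous_coe_real_ereal.tendsto b).comp hf).liminf_eq.symm
    _ ≤ liminf (fun t => (g t : EReal)) l :=
        liminf_le_liminf (hfg.mono fun _ ht => EReal.coe_le_coe_iff.2 ht)

theorem stmt_15_general (n : ℕ) (Ω : Set (EuclideanSpace ℝ (Fin n)))
    (hΩo : IsOpen Ω) (hΩb : Bornology.IsBounded Ω)
    (φ : EuclideanSpace ℝ (Fin n) → EReal)
    (u : EuclideanSpace ℝ (Fin n) → ℝ)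
    (hu : StrictConvexOn ℝ Ω u)
    (hbv : ∀ p ∈ frontier Ω, ∀ x ∈ Ω,
      Filter.liminf (fun s : ℝ => ((u ((1 - s) • p + s • x) : ℝ) : EReal))
        (nhdsWithin 0 (Set.Ioi 0)) ≤ φ p) :
    ∀ x ∈ Ω, ((u x : ℝ) : EReal) < convEnvE Ω φ x := by
  intro x hx
  have hcont : ContinuousOn u Ω := hu.convexOn.continuousOn hΩo
  obtain ⟨L, hmin⟩ := hu.convexOn.exists_isMinOn_sub_clm hΩo hcont hx
  have hv : StrictConvexOn ℝ Ω (fun y => u y - L y) :=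
    hu.sub_concaveOn (L.toLinearMap.concaveOn hu.1)
  obtain ⟨ε, hε, hnear⟩ := hv.convexOn.exists_pos_add_le_of_mem_frontier hΩo hΩb
    (hcont.sub L.continuous.continuousOn) hx (hv.lt_of_isMinOn hmin hx)
  set c := u x - L x + ε
  have hφ : ∀ p ∈ frontier Ω, ((L p + c : ℝ) : EReal) ≤ φ p := by
    intro p hp
    refine le_trans ?_ (hbv p hp x hx)
    refine (((L.continuous.tendsto p).comp (tendsto_combo_nhdsGT_zero p x)).add_const c)
      |>.coe_le_liminf_of_eventually_le ?_
    filter_upwards [Ioc_mem_nhdsGT one_half_pos] with s hs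
    simp only [Function.comp_apply]
    linarith [hnear p hp s hs]
  calc ((u x : ℝ) : EReal) < ((L x + c : ℝ) : EReal) := EReal.coe_lt_coe_iff.2 (by linarith)
    _ ≤ convEnvE Ω φ x := le_sSup ⟨L, c, hφ, rfl⟩

/-- Let `φ : ∂Ω → ℝ ∪ {+∞}` be lower semicontinuous, bounded below, not
identically `+∞`, and convex on segments of `∂Ω`. If `u` is strictly convex on `Ω` with
boundary values `≤ φ`, then `u < env(φ)` throughout `Ω`. -/
theorem stmt_15 (n : ℕ) (hn : 1 ≤ n) (Ω : Set (EuclideanSpace ℝ (Fin n)))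
    (hΩo : IsOpen Ω) (hΩc : Convex ℝ Ω) (hΩb : Bornology.IsBounded Ω)
    (hΩne : Ω.Nonempty)
    (φ : EuclideanSpace ℝ (Fin n) → EReal)
    (hφlsc : LowerSemicontinuousOn φ (frontier Ω))
    (hφbdd : ∃ m : ℝ, ∀ p ∈ frontier Ω, (m : EReal) ≤ φ p)
    (hφne : ∃ p ∈ frontier Ω, φ p ≠ ⊤)
    (hφconv : ∀ p ∈ frontier Ω, ∀ q ∈ frontier Ω, segment ℝ p q ⊆ frontier Ω →
      ∀ t ∈ Set.Icc (0 : ℝ) 1,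
        φ ((1 - t) • p + t • q) ≤ ((1 - t : ℝ) : EReal) * φ p + ((t : ℝ) : EReal) * φ q)
    (u : EuclideanSpace ℝ (Fin n) → ℝ)
    (hu : StrictConvexOn ℝ Ω u)
    (hbv : ∀ p ∈ frontier Ω, ∀ x ∈ Ω,
      Filter.liminf (fun s : ℝ => ((u ((1 - s) • p + s • x) : ℝ) : EReal))
        (nhdsWithin 0 (Set.Ioi 0)) ≤ φ p) :
    ∀ x ∈ Ω, ((u x : ℝ) : EReal) < convEnvE Ω φ x :=
  stmt_15_general n Ω hΩo hΩb φ u hu hbv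
end
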